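/- arXiv:1011.3708 — 11 statements merged into one kernel-verified Lean document; each statement's English description precedes it below -/
import Mathlib

section
/- The number of isomorphism classes of Catalan pairs of size n equals the n-th Catalan number. -/
/-!
The relation `S x y ∨ R y x` of a Catalan pair is a strict total order, so every Catalan pair is
isomorphic to one on `Fin n` in which `S` points forward and `R` backward; the only isomorphism
between two such pairs is the identity. In such a normalized pair, `S ∘ R ⊆ R` forces the
`S`-predecessors of each `y` to form an interval `[m y, y)`, and the pair is determined by the
sequence `m`. The intervals `[m j, j]` form a laminar family, and any laminar family of this shape
arises. Splitting such a sequence of length `n + 1` at `t = m n` gives two independent sequences of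
lengths `t` and `n - t`, which is the Catalan recursion.
-/

/-- A Catalan pair on a type `X`: two strict orders `S`, `R` whose
symmetrizations partition `X² \ diagonal`, with `S ∘ R ⊆ R`. -/
def IsCatalanPair {X : Type*} (S R : X → X → Prop) : Prop :=
  (∀ x, ¬ S x x) ∧ (∀ x y z, S x y → S y z → S x z) ∧
  (∀ x, ¬ R x x) ∧ (∀ x y z, R x y → R y z → R x z) ∧
  (∀ x y, x ≠ y → S x y ∨ S y x ∨ R x y ∨ R y x) ∧
  (∀ x y, ¬ ((S x y ∨ S y x) ∧ (R x y ∨ R y x))) ∧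
  (∀ x y z, S x y → R y z → R x z)

section General

variable {X Y : Type*} {S R : X → X → Prop}

namespace IsCatalanPair

theorem comap (h : IsCatalanPair S R) {f : Y → X} (hf : Function.Injective f) :
    IsCatalanPair (fun x y => S (f x) (f y)) (fun x y => R (f x) (f y)) := by
  obtain ⟨hSi, hSt, hRi, hRt, htot, hdis, hSR⟩ := h
  exact ⟨fun x => hSi _, fun x y z => hSt _ _ _, fun x => hRi _, fun x y z => hRt _ _ _,
    fun x y hxy => htot _ _ (hf.ne hxy), fun x y => hdis _ _, fun x y z => hSR _ _ _⟩

theorem isStrictTotalOrder (h : IsCatalanPair S R) :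
    IsStrictTotalOrder X (fun x y => S x y ∨ R y x) := by
  obtain ⟨hSi, hSt, hRi, hRt, htot, hdis, -⟩ := h
  refine { irrefl := fun x => ?_, trans := fun x y z => ?_, trichotomous := fun x y => ?_ } <;>
    grind

end IsCatalanPair

theorem exists_equiv_fin_of_isStrictTotalOrder [Fintype X] {n : ℕ} (hX : Fintype.card X = n)
    (r : X → X → Prop) [IsStrictTotalOrder X r] :
    ∃ e : X ≃ Fin n, ∀ x y, r x y ↔ e x < e y := by
  classical
  let := linearOrderOfSTO r
  let e := (Fintype.orderIsoFinOfCardEq X hX).symm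
  exact ⟨e.toEquiv, fun x y => e.lt_iff_lt.symm⟩

end General

abbrev CatalanPairOn (n : ℕ) :=
  {sr : (Fin n → Fin n → Prop) × (Fin n → Fin n → Prop) // IsCatalanPair sr.1 sr.2}

def CatalanPairOn.Iso {n : ℕ} (p q : CatalanPairOn n) : Prop :=
  ∃ ξ : Fin n ≃ Fin n, ∀ x y,
    (p.val.1 x y ↔ q.val.1 (ξ x) (ξ y)) ∧ (p.val.2 x y ↔ q.val.2 (ξ x) (ξ y))

theorem CatalanPairOn.iso_equivalence (n : ℕ) : Equivalence (@CatalanPairOn.Iso n) where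
  refl _ := ⟨Equiv.refl _, fun _ _ => ⟨Iff.rfl, Iff.rfl⟩⟩
  symm := by
    rintro p q ⟨ξ, h⟩
    refine ⟨ξ.symm, fun x y => ?_⟩
    simpa only [Equiv.apply_symm_apply, Iff.comm] using h (ξ.symm x) (ξ.symm y)
  trans := by
    rintro p q r ⟨ξ, h⟩ ⟨ζ, h'⟩
    exact ⟨ξ.trans ζ, fun x y =>
      ⟨(h x y).1.trans (h' (ξ x) (ξ y)).1, (h x y).2.trans (h' (ξ x) (ξ y)).2⟩⟩

/-- `m j` is the left end of an interval `[m j, j]`; `nested` says that these intervals form a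
laminar family. -/
@[ext]
structure LaminarSeq (n : ℕ) where
  toFun : Fin n → ℕ
  le_self : ∀ j, toFun j ≤ j
  nested : ∀ j k, j < k → toFun k ≤ j → toFun k ≤ toFun j

namespace LaminarSeq

instance (n : ℕ) : CoeFun (LaminarSeq n) (fun _ => Fin n → ℕ) := ⟨toFun⟩

instance (n : ℕ) : Finite (LaminarSeq n) :=
  Finite.of_injective (fun m (j : Fin n) => (⟨m j, (m.le_self j).trans_lt j.isLt⟩ : Fin n))
    fun _ _ h => LaminarSeq.ext <| funext fun j => congrArg Fin.val (congrFun h j)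

section Decompose

variable {n : ℕ}

def lastValue (m : LaminarSeq (n + 1)) : Fin (n + 1) :=
  ⟨m (Fin.last n), Nat.lt_succ_of_le (m.le_self _)⟩

variable (t : Fin (n + 1))

def lowerPart (m : LaminarSeq (n + 1)) : LaminarSeq t where
  toFun j := m ⟨j, by omega⟩
  le_self j := m.le_self _
  nested j k hjk := m.nested _ _ (Fin.mk_lt_mk.2 hjk)

def upperPart (m : LaminarSeq (n + 1)) : LaminarSeq (n - t) where
  toFun j := m ⟨t + j, by omega⟩ - t
  le_self j := by have := m.le_self ⟨t + j, by omega⟩; simp only at this; omega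
  nested j k hjk hle := by
    have := m.nested ⟨t + j, by omega⟩ ⟨t + k, by omega⟩ (Fin.mk_lt_mk.2 (by omega))
    simp only [Fin.lt_def] at hjk this hle ⊢
    omega

def glue (a : LaminarSeq t) (b : LaminarSeq (n - t)) : LaminarSeq (n + 1) where
  toFun j := if h : (j : ℕ) < t then a ⟨j, h⟩
    else if h' : (j : ℕ) < n then t + b ⟨j - t, by omega⟩ else t
  le_self j := by
    have := fun h : (j : ℕ) < t => a.le_self ⟨j, h⟩
    have := fun (h : t ≤ (j : ℕ)) (h' : (j : ℕ) < n) => b.le_self ⟨j - t, by omega⟩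
    split_ifs <;> grind
  nested j k hjk hle := by
    rw [Fin.lt_def] at hjk
    have ha := fun hk : (k : ℕ) < t => a.nested ⟨j, by omega⟩ ⟨k, hk⟩ hjk
    have hb := fun (hj : t ≤ (j : ℕ)) (hk : (k : ℕ) < n) =>
      b.nested ⟨j - t, by omega⟩ ⟨k - t, by omega⟩ (by rw [Fin.mk_lt_mk]; omega)
    split_ifs at hle ⊢ <;> grind

theorem lastValue_glue (a : LaminarSeq t) (b : LaminarSeq (n - t)) :
    (glue t a b).lastValue = t := by
  have := t.isLt
  refine Fin.ext ?_
  change dite _ _ _ = _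
  rw [dif_neg (by rw [Fin.val_last]; omega), dif_neg (by simp)]

/-- No interval `[m j, j]` straddles `t = m n`, so `m` splits into its values below `t` and its
values (shifted by `t`) from `t` on. -/
def fiberEquiv :
    {m : LaminarSeq (n + 1) // m.lastValue = t} ≃ LaminarSeq t × LaminarSeq (n - t) where
  toFun m := (lowerPart t m, upperPart t m)
  invFun ab := ⟨glue t ab.1 ab.2, lastValue_glue t ab.1 ab.2⟩
  left_inv := by
    rintro ⟨m, rfl⟩
    ext j
    change dite _ _ _ = _
    split_ifs with h h'
    · rfl
    · have hjt : m (Fin.last n) ≤ m j :=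
        m.nested j (Fin.last n) (by rw [Fin.lt_def, Fin.val_last]; exact h') (not_lt.1 h)
      change _ + (m ⟨_ + (j - _), _⟩ - _) = m j
      rw [show (⟨m.lastValue + (j - m.lastValue), _⟩ : Fin (n + 1)) = j from
        Fin.ext (by simp only; omega)]
      have : (m.lastValue : ℕ) = m (Fin.last n) := rfl
      omega
    · obtain rfl : j = Fin.last n := Fin.ext (by rw [Fin.val_last]; omega)
      rfl
  right_inv := by
    rintro ⟨a, b⟩
    ext j
    · exact dif_pos j.isLt
    · change dite _ _ _ - (t : ℕ) = b j
      rw [dif_neg (by simp only; omega), dif_pos (by simp only; omega)]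
      simp only [Nat.add_sub_cancel_left]

end Decompose

theorem card_eq_catalan (n : ℕ) : Nat.card (LaminarSeq n) = catalan n := by
  induction n using Nat.strong_induction_on with
  | _ n ih =>
  cases n with
  | zero =>
    rw [catalan_zero, Nat.card_eq_one_iff_unique]
    exact ⟨⟨fun _ _ => LaminarSeq.ext (funext fun j => j.elim0)⟩,
      ⟨⟨Fin.elim0, fun j => j.elim0, fun j => j.elim0⟩⟩⟩
  | succ n =>
    rw [← Nat.card_congr (Equiv.sigmaFiberEquiv lastValue), Nat.card_sigma, catalan_succ]
    refine Finset.sum_congr rfl fun t _ => ?_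
    rw [Nat.card_congr (fiberEquiv t), Nat.card_prod, ih t (by omega), ih (n - t) (by omega)]

variable {n : ℕ} (m : LaminarSeq n)

def relS (x y : Fin n) : Prop := x < y ∧ m y ≤ x

def relR (x y : Fin n) : Prop := y < x ∧ (y : ℕ) < m x

theorem isCatalanPair : IsCatalanPair m.relS m.relR := by
  have := m.nested
  simp only [Fin.lt_def] at this
  refine ⟨?_, ?_, ?_, ?_, ?_, ?_, ?_⟩ <;> simp only [relS, relR, Fin.lt_def, Fin.ne_iff_vne] <;>
    grind

theorem relS_or_relR_iff {x y : Fin n} : m.relS x y ∨ m.relR y x ↔ x < y := by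
  simp only [relS, relR]
  grind

def toCatalanPairOn : CatalanPairOn n := ⟨(m.relS, m.relR), m.isCatalanPair⟩

end LaminarSeq

noncomputable def leftEnd {n : ℕ} (S : Fin n → Fin n → Prop) (y : Fin n) : ℕ :=
  sInf {k : ℕ | ∀ x : Fin n, k ≤ x → x < y → S x y}

section Normalized

variable {n : ℕ} {S R : Fin n → Fin n → Prop}

theorem leftEnd_le_self (y : Fin n) : leftEnd S y ≤ y :=
  Nat.sInf_le fun _ hyx hxy => absurd hxy (not_lt.2 hyx)

theorem rel_of_leftEnd_le {x y : Fin n} (hx : leftEnd S y ≤ x) (hxy : x < y) : S x y :=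
  Nat.sInf_mem (s := {k : ℕ | ∀ x : Fin n, k ≤ x → x < y → S x y})
    ⟨y, fun _ hyx hxy => absurd hxy (not_lt.2 hyx)⟩ x hx hxy

namespace IsCatalanPair

theorem S_of_S_of_lt_of_lt (h : IsCatalanPair S R) (hlt : ∀ x y, S x y ∨ R y x ↔ x < y)
    {a y z : Fin n} (hay : S a y) (haz : a < z) (hzy : z < y) : S z y := by
  obtain ⟨-, -, -, -, htot, -, hSR⟩ := h
  have := htot z y hzy.ne
  grind

theorem S_iff_lt_and_leftEnd_le (h : IsCatalanPair S R) (hlt : ∀ x y, S x y ∨ R y x ↔ x < y)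
    {x y : Fin n} : S x y ↔ x < y ∧ leftEnd S y ≤ x := by
  refine ⟨fun hxy => ⟨(hlt x y).1 (.inl hxy), Nat.sInf_le fun z hxz hzy => ?_⟩,
    fun hxy => rel_of_leftEnd_le hxy.2 hxy.1⟩
  rcases (Fin.le_def.2 hxz).lt_or_eq with hxz | rfl
  exacts [h.S_of_S_of_lt_of_lt hlt hxy hxz hzy, hxy]

theorem R_iff_lt_and_lt_leftEnd (h : IsCatalanPair S R) (hlt : ∀ x y, S x y ∨ R y x ↔ x < y)
    {x y : Fin n} : R x y ↔ y < x ∧ (y : ℕ) < leftEnd S x := by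
  have hdis := h.2.2.2.2.2.1 y x
  have := hlt y x
  have hR : R x y ↔ y < x ∧ ¬ S y x := by grind
  rw [hR, h.S_iff_lt_and_leftEnd_le hlt, not_and, not_le]
  exact and_congr_right fun hyx => imp_iff_right hyx

theorem leftEnd_le_leftEnd (h : IsCatalanPair S R) (hlt : ∀ x y, S x y ∨ R y x ↔ x < y)
    {j k : Fin n} (hjk : j < k) (hk : leftEnd S k ≤ j) : leftEnd S k ≤ leftEnd S j := by
  rcases (leftEnd_le_self (S := S) j).lt_or_eq with hj | hj
  · let i : Fin n := ⟨leftEnd S j, hj.trans j.isLt⟩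
    have hij : S i j := rel_of_leftEnd_le le_rfl hj
    have hik : S i k := h.2.1 i j k hij (rel_of_leftEnd_le hk hjk)
    exact ((h.S_iff_lt_and_leftEnd_le hlt).1 hik).2
  · exact hj ▸ hk

end IsCatalanPair

end Normalized

namespace LaminarSeq

variable {n : ℕ}

theorem leftEnd_relS (m : LaminarSeq n) : leftEnd m.relS = m := by
  funext y
  refine le_antisymm (Nat.sInf_le fun x hx hxy => ⟨hxy, hx⟩) (not_lt.1 fun hy => ?_)
  have hyn : leftEnd m.relS y < n := hy.trans_le (m.le_self y) |>.trans y.isLt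
  exact hy.not_ge (rel_of_leftEnd_le (x := ⟨_, hyn⟩) le_rfl (hy.trans_le (m.le_self y))).2

theorem relS_injective : Function.Injective (relS (n := n)) := fun m m' h =>
  LaminarSeq.ext (by rw [← leftEnd_relS m, ← leftEnd_relS m', h])

theorem eq_of_iso {m m' : LaminarSeq n} (h : m.toCatalanPairOn.Iso m'.toCatalanPairOn) :
    m = m' := by
  obtain ⟨ξ, hξ⟩ := h
  have hξ_mono : StrictMono ξ := fun x y hxy => by
    rw [← m'.relS_or_relR_iff]
    exact ((m.relS_or_relR_iff).2 hxy).imp (hξ x y).1.1 (hξ y x).2.1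
  have hξ_id (x : Fin n) : ξ x = x := le_antisymm hξ_mono.apply_le hξ_mono.le_apply
  refine relS_injective (funext₂ fun x y => propext ?_)
  have := (hξ x y).1
  rwa [hξ_id, hξ_id] at this

variable {S R : Fin n → Fin n → Prop}

noncomputable def ofCatalanPair (h : IsCatalanPair S R) (hlt : ∀ x y, S x y ∨ R y x ↔ x < y) :
    LaminarSeq n where
  toFun := leftEnd S
  le_self := leftEnd_le_self
  nested _ _ := h.leftEnd_le_leftEnd hlt

theorem relS_ofCatalanPair (h : IsCatalanPair S R) (hlt : ∀ x y, S x y ∨ R y x ↔ x < y) :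
    (ofCatalanPair h hlt).relS = S :=
  funext₂ fun _ _ => propext (h.S_iff_lt_and_leftEnd_le hlt).symm

theorem relR_ofCatalanPair (h : IsCatalanPair S R) (hlt : ∀ x y, S x y ∨ R y x ↔ x < y) :
    (ofCatalanPair h hlt).relR = R :=
  funext₂ fun _ _ => propext (h.R_iff_lt_and_lt_leftEnd hlt).symm

theorem exists_iso (p : CatalanPairOn n) : ∃ m : LaminarSeq n, m.toCatalanPairOn.Iso p := by
  obtain ⟨⟨S, R⟩, h⟩ := p
  have := h.isStrictTotalOrder
  obtain ⟨e, he⟩ :=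
    exists_equiv_fin_of_isStrictTotalOrder (Fintype.card_fin n) (fun x y => S x y ∨ R y x)
  have hlt (x y : Fin n) : S (e.symm x) (e.symm y) ∨ R (e.symm y) (e.symm x) ↔ x < y := by
    simpa only [Equiv.apply_symm_apply] using he (e.symm x) (e.symm y)
  refine ⟨ofCatalanPair (h.comap e.symm.injective) hlt, e.symm, fun x y => ?_⟩
  simp only [toCatalanPairOn, relS_ofCatalanPair, relR_ofCatalanPair, and_self]

end LaminarSeq

/-- the number of isomorphism classes of Catalan pairs of size `n`
equals the `n`-th Catalan number. -/
theorem card_catalan_pairs (n : ℕ) :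
    Nat.card (Quot (fun
        (p q : {sr : (Fin n → Fin n → Prop) × (Fin n → Fin n → Prop) //
          IsCatalanPair sr.1 sr.2}) =>
      ∃ ξ : Fin n ≃ Fin n, ∀ x y,
        (p.val.1 x y ↔ q.val.1 (ξ x) (ξ y)) ∧ (p.val.2 x y ↔ q.val.2 (ξ x) (ξ y))))
      = catalan n := by
  change Nat.card (Quot (@CatalanPairOn.Iso n)) = catalan n
  have hbij : Function.Bijective
      fun m : LaminarSeq n => Quot.mk CatalanPairOn.Iso m.toCatalanPairOn := by
    refine ⟨fun m m' hm => LaminarSeq.eq_of_iso ?_, Quot.ind fun p => ?_⟩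
    · exact (CatalanPairOn.iso_equivalence n).eqvGen_iff.1 (Quot.eq.1 hm)
    · obtain ⟨m, hm⟩ := LaminarSeq.exists_iso p
      exact ⟨m, Quot.sound hm⟩
  rw [← Nat.card_eq_of_bijective _ hbij, LaminarSeq.card_eq_catalan]
end

section
/- Let (S_A,R_A) and (S_B,R_B) be Catalan pairs on disjoint sets X_A and X_B, and let x be a new element not in X_A ∪ X_B. Define X = X_A ∪ X_B ∪ {x}, S = S_A ∪ S_B ∪ {(a,x) : a ∈ X_A}, and R = R_A ∪ R_B ∪ {(a,b) : a ∈ X_A, b ∈ X_B} ∪ {(x,b) : b ∈ X_B}. Then (S,R) is a Catalan pair on X. -/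
/-- A Catalan pair on a set `X ⊆ α`: the relations are supported on `X`,
are strict orders, their symmetrizations partition `X² \ diagonal`,
and `S ∘ R ⊆ R`. -/
def IsCatalanPairOn {α : Type*} (X : Set α) (S R : α → α → Prop) : Prop :=
  (∀ a b, S a b → a ∈ X ∧ b ∈ X) ∧
  (∀ a b, R a b → a ∈ X ∧ b ∈ X) ∧
  (∀ a, ¬ S a a) ∧ (∀ a b c, S a b → S b c → S a c) ∧
  (∀ a, ¬ R a a) ∧ (∀ a b c, R a b → R b c → R a c) ∧
  (∀ a ∈ X, ∀ b ∈ X, a ≠ b → S a b ∨ S b a ∨ R a b ∨ R b a) ∧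
  (∀ a b, ¬ ((S a b ∨ S b a) ∧ (R a b ∨ R b a))) ∧
  (∀ a b c, S a b → R b c → R a c)

/-- the recursive construction `C = x A B` produces a Catalan pair. -/
theorem catalanPair_of_construction {α : Type*} (XA XB : Set α)
    (SA RA SB RB : α → α → Prop) (x : α)
    (hA : IsCatalanPairOn XA SA RA) (hB : IsCatalanPairOn XB SB RB)
    (hdisj : Disjoint XA XB) (hx : x ∉ XA ∪ XB) :
    IsCatalanPairOn (XA ∪ XB ∪ {x})
      (fun a b => SA a b ∨ SB a b ∨ (a ∈ XA ∧ b = x))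
      (fun a b => RA a b ∨ RB a b ∨ (a ∈ XA ∧ b ∈ XB) ∨ (a = x ∧ b ∈ XB)) := by
  obtain ⟨SAs, RAs, SAi, SAt, RAi, RAt, Atot, Aex, ASR⟩ := hA
  obtain ⟨SBs, RBs, SBi, SBt, RBi, RBt, Btot, Bex, BSR⟩ := hB
  have hd : ∀ y, y ∈ XA → y ∈ XB → False := fun y ha hb =>
    Set.disjoint_left.mp hdisj ha hb
  have hxA : x ∉ XA := fun h => hx (Or.inl h)
  have hxB : x ∉ XB := fun h => hx (Or.inr h)
  have memA : ∀ y, y ∈ XA → y ∈ XA ∪ XB ∪ {x} := fun y h => Or.inl (Or.inl h)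
  have memB : ∀ y, y ∈ XB → y ∈ XA ∪ XB ∪ {x} := fun y h => Or.inl (Or.inr h)
  have memx : x ∈ XA ∪ XB ∪ {x} := Or.inr rfl
  refine ⟨?_, ?_, ?_, ?_, ?_, ?_, ?_, ?_, ?_⟩
  · -- S support
    rintro a b (h | h | ⟨h1, rfl⟩)
    · exact ⟨memA a (SAs a b h).1, memA b (SAs a b h).2⟩
    · exact ⟨memB a (SBs a b h).1, memB b (SBs a b h).2⟩
    · exact ⟨memA a h1, memx⟩
  · -- R support
    rintro a b (h | h | ⟨h1, h2⟩ | ⟨rfl, h2⟩)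
    · exact ⟨memA a (RAs a b h).1, memA b (RAs a b h).2⟩
    · exact ⟨memB a (RBs a b h).1, memB b (RBs a b h).2⟩
    · exact ⟨memA a h1, memB b h2⟩
    · exact ⟨memx, memB b h2⟩
  · -- S irrefl
    rintro a (h | h | ⟨h1, rfl⟩)
    · exact SAi a h
    · exact SBi a h
    · exact hxA h1
  · -- S trans
    rintro a b c (h | h | ⟨h1, rfl⟩) (g | g | ⟨g1, g2⟩)
    · exact Or.inl (SAt a b c h g)
    · exact (hd b (SAs a b h).2 (SBs b c g).1).elim
    · exact Or.inr (Or.inr ⟨(SAs a b h).1, g2⟩)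
    · exact (hd b (SAs b c g).1 (SBs a b h).2).elim
    · exact Or.inr (Or.inl (SBt a b c h g))
    · exact (hd b g1 (SBs a b h).2).elim
    · exact (hxA (SAs _ _ g).1).elim
    · exact (hxB (SBs _ _ g).1).elim
    · exact (hxA g1).elim
  · -- R irrefl
    rintro a (h | h | ⟨h1, h2⟩ | ⟨rfl, h2⟩)
    · exact RAi a h
    · exact RBi a h
    · exact hd a h1 h2
    · exact hxB h2
  · -- R trans
    rintro a b c (h | h | ⟨h1, h2⟩ | ⟨h3, h2⟩) (g | g | ⟨g1, g2⟩ | ⟨g3, g2⟩)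
    · exact Or.inl (RAt a b c h g)
    · exact (hd b (RAs a b h).2 (RBs b c g).1).elim
    · exact Or.inr (Or.inr (Or.inl ⟨(RAs a b h).1, g2⟩))
    · exact (hxA (g3 ▸ (RAs a b h).2)).elim
    · exact (hd b (RAs b c g).1 (RBs a b h).2).elim
    · exact Or.inr (Or.inl (RBt a b c h g))
    · exact (hd b g1 (RBs a b h).2).elim
    · exact (hxB (g3 ▸ (RBs a b h).2)).elim
    · exact (hd b (RAs b c g).1 h2).elim
    · exact Or.inr (Or.inr (Or.inl ⟨h1, (RBs b c g).2⟩))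
    · exact (hd b g1 h2).elim
    · exact (hxB (g3 ▸ h2)).elim
    · exact (hd b (RAs b c g).1 h2).elim
    · exact Or.inr (Or.inr (Or.inr ⟨h3, (RBs b c g).2⟩))
    · exact (hd b g1 h2).elim
    · exact (hxB (g3 ▸ h2)).elim
  · -- totality
    intro a ha b hb hne
    rcases ha with (ha | ha) | ha <;> rcases hb with (hb | hb) | hb
    · rcases Atot a ha b hb hne with h | h | h | h
      · exact Or.inl (Or.inl h)
      · exact Or.inr (Or.inl (Or.inl h))
      · exact Or.inr (Or.inr (Or.inl (Or.inl h)))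
      · exact Or.inr (Or.inr (Or.inr (Or.inl h)))
    · exact Or.inr (Or.inr (Or.inl (Or.inr (Or.inr (Or.inl ⟨ha, hb⟩)))))
    · exact Or.inl (Or.inr (Or.inr ⟨ha, hb⟩))
    · exact Or.inr (Or.inr (Or.inr (Or.inr (Or.inr (Or.inl ⟨hb, ha⟩)))))
    · rcases Btot a ha b hb hne with h | h | h | h
      · exact Or.inl (Or.inr (Or.inl h))
      · exact Or.inr (Or.inl (Or.inr (Or.inl h)))
      · exact Or.inr (Or.inr (Or.inl (Or.inr (Or.inl h))))
      · exact Or.inr (Or.inr (Or.inr (Or.inr (Or.inl h))))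
    · exact Or.inr (Or.inr (Or.inr (Or.inr (Or.inr (Or.inr ⟨hb, ha⟩)))))
    · exact Or.inr (Or.inl (Or.inr (Or.inr ⟨hb, ha⟩)))
    · exact Or.inr (Or.inr (Or.inl (Or.inr (Or.inr (Or.inr ⟨ha, hb⟩)))))
    · exact absurd (ha.trans hb.symm) hne
  · -- exclusivity
    rintro a b ⟨hs, hr⟩
    rcases hs with (h | h | ⟨h1, h2⟩) | (h | h | ⟨h1, h2⟩) <;>
      rcases hr with (g | g | ⟨g1, g2⟩ | ⟨g3, g4⟩) | (g | g | ⟨g1, g2⟩ | ⟨g3, g4⟩)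
    · exact Aex a b ⟨Or.inl h, Or.inl g⟩
    · exact hd a (SAs a b h).1 (RBs a b g).1
    · exact hd b (SAs a b h).2 g2
    · exact hxA (g3 ▸ (SAs a b h).1)
    · exact Aex a b ⟨Or.inl h, Or.inr g⟩
    · exact hd a (SAs a b h).1 (RBs b a g).2
    · exact hd a (SAs a b h).1 g2
    · exact hd a (SAs a b h).1 g4
    · exact hd a (RAs a b g).1 (SBs a b h).1
    · exact Bex a b ⟨Or.inl h, Or.inl g⟩
    · exact hd a g1 (SBs a b h).1
    · exact hxB (g3 ▸ (SBs a b h).1)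
    · exact hd a (RAs b a g).2 (SBs a b h).1
    · exact Bex a b ⟨Or.inl h, Or.inr g⟩
    · exact hd b g1 (SBs a b h).2
    · exact hxB (g3 ▸ (SBs a b h).2)
    · exact hxA (h2 ▸ (RAs a b g).2)
    · exact hd a h1 (RBs a b g).1
    · exact hxB (h2 ▸ g2)
    · exact hxA (g3 ▸ h1)
    · exact hxA (h2 ▸ (RAs b a g).1)
    · exact hd a h1 (RBs b a g).2
    · exact hxA (h2 ▸ g1)
    · exact hd a h1 g4
    · exact Aex a b ⟨Or.inr h, Or.inl g⟩
    · exact hd a (SAs b a h).2 (RBs a b g).1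
    · exact hd b (SAs b a h).1 g2
    · exact hxA (g3 ▸ (SAs b a h).2)
    · exact Aex a b ⟨Or.inr h, Or.inr g⟩
    · exact hd a (SAs b a h).2 (RBs b a g).2
    · exact hd a (SAs b a h).2 g2
    · exact hd a (SAs b a h).2 g4
    · exact hd a (RAs a b g).1 (SBs b a h).2
    · exact Bex a b ⟨Or.inr h, Or.inl g⟩
    · exact hd a g1 (SBs b a h).2
    · exact hxB (g3 ▸ (SBs b a h).2)
    · exact hd b (RAs b a g).1 (SBs b a h).1
    · exact Bex a b ⟨Or.inr h, Or.inr g⟩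
    · exact hd b g1 (SBs b a h).1
    · exact hxB (g3 ▸ (SBs b a h).1)
    · exact hxA (h2 ▸ (RAs a b g).1)
    · exact hd b h1 (RBs a b g).2
    · exact hxA (h2 ▸ g1)
    · exact hd b h1 g4
    · exact hxA (h2 ▸ (RAs b a g).2)
    · exact hd b h1 (RBs b a g).1
    · exact hxB (h2 ▸ g2)
    · exact hxA (g3 ▸ h1)
  · -- S ∘ R ⊆ R
    rintro a b c (h | h | ⟨h1, rfl⟩) (g | g | ⟨g1, g2⟩ | ⟨g3, g2⟩)
    · exact Or.inl (ASR a b c h g)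
    · exact (hd b (SAs a b h).2 (RBs b c g).1).elim
    · exact Or.inr (Or.inr (Or.inl ⟨(SAs a b h).1, g2⟩))
    · exact (hxA (g3 ▸ (SAs a b h).2)).elim
    · exact (hd b (RAs b c g).1 (SBs a b h).2).elim
    · exact Or.inr (Or.inl (BSR a b c h g))
    · exact (hd b g1 (SBs a b h).2).elim
    · exact (hxB (g3 ▸ (SBs a b h).2)).elim
    · exact (hxA (RAs _ _ g).1).elim
    · exact (hxB (RBs _ _ g).1).elim
    · exact (hxA g1).elim
    · exact Or.inr (Or.inr (Or.inl ⟨h1, g2⟩))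
end

section
/- A permutation π ∈ S_n is 312-avoiding if and only if the pair (S,R), where iSj iff i<j and π(i)>π(j), and iRj iff i<j and π(i)<π(j), is a Catalan pair on {1,…,n}. -/
/-- `π` avoids the pattern 312. -/
def Avoids312 {n : ℕ} (π : Equiv.Perm (Fin n)) : Prop :=
  ¬ ∃ i j k : Fin n, i < j ∧ j < k ∧ π j < π k ∧ π k < π i

/-- `π` is 312-avoiding iff the inversion/noninversion pair
`(S,R)` is a Catalan pair on `{1,…,n}`. -/
theorem avoids312_iff_catalanPair {n : ℕ} (π : Equiv.Perm (Fin n)) :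
    Avoids312 π ↔
      IsCatalanPair (fun i j : Fin n => i < j ∧ π j < π i)
        (fun i j : Fin n => i < j ∧ π i < π j) := by
  constructor
  · intro h
    refine ⟨fun x ⟨hx, _⟩ => lt_irrefl _ hx,
      fun x y z ⟨h1, h2⟩ ⟨h3, h4⟩ => ⟨h1.trans h3, h4.trans h2⟩,
      fun x ⟨hx, _⟩ => lt_irrefl _ hx,
      fun x y z ⟨h1, h2⟩ ⟨h3, h4⟩ => ⟨h1.trans h3, h2.trans h4⟩,
      ?_, ?_, ?_⟩
    · intro x y hxy
      rcases lt_or_gt_of_ne hxy with hlt | hgt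
      · rcases lt_or_gt_of_ne (fun hp => hxy (π.injective (Fin.ext hp))) with hp | hp
        · exact Or.inr (Or.inr (Or.inl ⟨hlt, hp⟩))
        · exact Or.inl ⟨hlt, hp⟩
      · rcases lt_or_gt_of_ne (fun hp => hxy (π.injective (Fin.ext hp))) with hp | hp
        · exact Or.inr (Or.inl ⟨hgt, hp⟩)
        · exact Or.inr (Or.inr (Or.inr ⟨hgt, hp⟩))
    · rintro x y ⟨hS | hS, hR | hR⟩
      · exact lt_asymm hS.2 hR.2
      · exact lt_asymm hS.1 hR.1
      · exact lt_asymm hS.1 hR.1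
      · exact lt_asymm hS.2 hR.2
    · intro x y z ⟨h1, h2⟩ ⟨h3, h4⟩
      refine ⟨h1.trans h3, ?_⟩
      by_contra hc
      push_neg at hc
      rcases lt_or_eq_of_le hc with hlt | heq
      · exact h ⟨x, y, z, h1, h3, h4, hlt⟩
      · exact absurd (π.injective heq.symm).symm (ne_of_gt (h1.trans h3))
  · rintro ⟨_, _, _, _, _, _, hSR⟩ ⟨i, j, k, h1, h2, h3, h4⟩
    exact absurd (hSR i j k ⟨h1, h3.trans h4⟩ ⟨h2, h3⟩).2 (not_lt.mpr h4.le)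
end

section
/- For π ∈ S_n with S and R defined by iSj iff i<j and π(i)>π(j), iRj iff i<j and π(i)<π(j): π avoids 312 if and only if S∘R ⊆ R. -/
/-- `π` avoids 312 iff `S ∘ R ⊆ R` for the inversion/noninversion
relations. -/
theorem avoids312_iff_comp_subset {n : ℕ} (π : Equiv.Perm (Fin n)) :
    Avoids312 π ↔
      (∀ i j k : Fin n, (i < j ∧ π j < π i) → (j < k ∧ π j < π k) →
        (i < k ∧ π i < π k)) := by
  constructor
  · intro h i j k ⟨hij, hji⟩ ⟨hjk, hjk'⟩
    refine ⟨hij.trans hjk, ?_⟩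
    rcases lt_trichotomy (π i) (π k) with h1 | h1 | h1
    · exact h1
    · exact absurd (π.injective h1 ▸ hij.trans hjk) (lt_irrefl _)
    · exact absurd ⟨i, j, k, hij, hjk, hjk', h1⟩ h
  · rintro h ⟨i, j, k, hij, hjk, h1, h2⟩
    exact absurd (h i j k ⟨hij, h1.trans h2⟩ ⟨hjk, h1⟩).2 (lt_asymm h2)
end

section
/- Let a₁,…,a_n be a sequence of integers with i ≤ a_i ≤ n for all i, and such that if i ≤ j ≤ a_i then a_j ≤ a_i. Define relations on indices {1,…,n} by: i R j iff i<j and a_i<a_j; i S j iff j<i and a_i ≤ a_j. Then (S,R) is a Catalan pair on {1,…,n}. -/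
/-! If `i S j` and `j R k` but `k ≤ i`, then `j < k ≤ i ≤ a i ≤ a j`, so `k` lies in the block
`[j, a j]` covered by `j` and hence `a k ≤ a j`, contradicting `a j < a k`. Everything else
only uses that `<` and `≤` are orders on positions and values. -/

section

variable {ι β : Type*} [LinearOrder ι] [LinearOrder β]

theorem isCatalanPairOn_of_comp_lt {X : Set ι} {a : ι → β}
    (hcomp : ∀ i ∈ X, ∀ j ∈ X, ∀ k ∈ X, j < i → a i ≤ a j → j < k → a j < a k → i < k) :
    IsCatalanPairOn X (fun i j => i ∈ X ∧ j ∈ X ∧ j < i ∧ a i ≤ a j)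
      (fun i j => i ∈ X ∧ j ∈ X ∧ i < j ∧ a i < a j) := by
  refine ⟨fun i j h => ⟨h.1, h.2.1⟩, fun i j h => ⟨h.1, h.2.1⟩,
    fun i h => h.2.2.1.false,
    fun i j k hij hjk => ⟨hij.1, hjk.2.1, hjk.2.2.1.trans hij.2.2.1, hij.2.2.2.trans hjk.2.2.2⟩,
    fun i h => h.2.2.1.false,
    fun i j k hij hjk => ⟨hij.1, hjk.2.1, hij.2.2.1.trans hjk.2.2.1, hij.2.2.2.trans hjk.2.2.2⟩,
    ?total, ?disjoint, ?comp⟩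
  case total =>
    intro i hi j hj hne
    rcases hne.lt_or_gt with hij | hji
    · rcases lt_or_ge (a i) (a j) with ha | ha
      · exact .inr <| .inr <| .inl ⟨hi, hj, hij, ha⟩
      · exact .inr <| .inl ⟨hj, hi, hij, ha⟩
    · rcases lt_or_ge (a j) (a i) with ha | ha
      · exact .inr <| .inr <| .inr ⟨hj, hi, hji, ha⟩
      · exact .inl ⟨hi, hj, hji, ha⟩
  case disjoint =>
    rintro i j ⟨hS | hS, hR | hR⟩
    · exact (hS.2.2.1.trans hR.2.2.1).false
    · exact (hS.2.2.2.trans_lt hR.2.2.2).false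
    · exact (hS.2.2.2.trans_lt hR.2.2.2).false
    · exact (hS.2.2.1.trans hR.2.2.1).false
  case comp =>
    rintro i j k ⟨hi, hj, hji, haij⟩ ⟨-, hk, hjk, hajk⟩
    exact ⟨hi, hk, hcomp i hi j hj k hk hji haij hjk hajk, haij.trans_lt hajk⟩

end

theorem lt_of_cover {X : Set ℕ} {a : ℕ → ℤ} (hle : ∀ i ∈ X, (i : ℤ) ≤ a i)
    (hcov : ∀ i ∈ X, ∀ j ∈ X, i ≤ j → (j : ℤ) ≤ a i → a j ≤ a i)
    {i j k : ℕ} (hi : i ∈ X) (hj : j ∈ X) (hk : k ∈ X)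
    (haij : a i ≤ a j) (hjk : j < k) (hajk : a j < a k) : i < k := by
  by_contra! hki
  have hk_cov : (k : ℤ) ≤ a j :=
    calc (k : ℤ) ≤ i := by exact_mod_cast hki
      _ ≤ a i := hle i hi
      _ ≤ a j := haij
  exact (hcov j hj k hk hjk.le hk_cov).not_gt hajk

/-- for a sequence with `i ≤ a i ≤ n` and the monotone-cover
property, the relations `i R j ↔ i<j ∧ a i < a j` and `i S j ↔ j<i ∧ a i ≤ a j`
form a Catalan pair on `{1,…,n}`. -/
theorem catalanPair_of_sequence (n : ℕ) (a : ℕ → ℤ)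
    (hbd : ∀ i ∈ Set.Icc 1 n, (i : ℤ) ≤ a i ∧ a i ≤ n)
    (hcov : ∀ i ∈ Set.Icc 1 n, ∀ j ∈ Set.Icc 1 n, i ≤ j → (j : ℤ) ≤ a i → a j ≤ a i) :
    IsCatalanPairOn (Set.Icc 1 n)
      (fun i j => i ∈ Set.Icc 1 n ∧ j ∈ Set.Icc 1 n ∧ j < i ∧ a i ≤ a j)
      (fun i j => i ∈ Set.Icc 1 n ∧ j ∈ Set.Icc 1 n ∧ i < j ∧ a i < a j) :=
  isCatalanPairOn_of_comp_lt fun _ hi _ hj _ hk _ haij hjk hajk =>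
    lt_of_cover (fun i hi => (hbd i hi).1) hcov hi hj hk haij hjk hajk
end

section
/- Let a₁,…,a_n be integers with i ≤ a_i ≤ n and the property that i ≤ j ≤ a_i implies a_j ≤ a_i. With iRj iff i<j and a_i<a_j, and iSj iff j<i and a_i ≤ a_j, the relation S∘R is contained in R: if jSi and iRk then jRk. -/
/-- for a sequence with `i ≤ a i ≤ n` and the monotone-cover
property, `S ∘ R ⊆ R`: if `jSi` (i.e. `i<j ∧ a j ≤ a i`) and `iRk`
(i.e. `i<k ∧ a i < a k`) then `jRk` (i.e. `j<k ∧ a j < a k`). -/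
theorem sequence_comp_subset (n : ℕ) (a : ℕ → ℤ)
    (hbd : ∀ i ∈ Set.Icc 1 n, (i : ℤ) ≤ a i ∧ a i ≤ n)
    (hcov : ∀ i ∈ Set.Icc 1 n, ∀ j ∈ Set.Icc 1 n, i ≤ j → (j : ℤ) ≤ a i → a j ≤ a i)
    (i j k : ℕ) (hi : i ∈ Set.Icc 1 n) (hj : j ∈ Set.Icc 1 n) (hk : k ∈ Set.Icc 1 n)
    (hS : i < j ∧ a j ≤ a i) (hR : i < k ∧ a i < a k) :
    j < k ∧ a j < a k := by
  obtain ⟨hij, haji⟩ := hS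
  obtain ⟨hik, haik⟩ := hR
  refine ⟨?_, lt_of_le_of_lt haji haik⟩
  by_contra h
  push_neg at h
  have hja : (j : ℤ) ≤ a j := (hbd j hj).1
  have hka : (k : ℤ) ≤ a i := le_trans (by exact_mod_cast Int.ofNat_le.2 h) (le_trans hja haji)
  exact absurd (hcov i hi k hk hik.le hka) (not_le.2 haik)
end

section
/- Let a₁ ≤ a₂ ≤ … ≤ a_n be a weakly increasing integer sequence with 1 ≤ a_i ≤ n and exactly one fixed point f. Define a'_y = a_y − y for y ≤ f and a'_z = z − a_z for f < z ≤ n. If there are indices x < y < z ≤ f with a'_x > a'_y, a'_z > a'_y and a'_x > a'_z, then there exists an index w with x < w < y and a'_w = a'_z. -/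
/-! Below the fixed point, `a'_k = a_k - k` drops by at most one per step because `a` is weakly
increasing, so a discrete intermediate value argument on `[x, y]` hits the value `a'_z`. -/

/-- The auxiliary sequence `a'`: `a' y = a y - y` for `y ≤ f`, and
`a' z = z - a z` for `z > f`. -/
def aprime (a : ℕ → ℤ) (f : ℕ) (k : ℕ) : ℤ :=
  if k ≤ f then a k - k else (k : ℤ) - a k

theorem Int.exists_eq_of_sub_one_le_succ {u : ℕ → ℤ} {c : ℤ} {x y : ℕ} (hxy : x ≤ y)
    (hstep : ∀ k, x ≤ k → k < y → u k - 1 ≤ u (k + 1)) (hx : c ≤ u x) (hy : u y ≤ c) :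
    ∃ w, x ≤ w ∧ w ≤ y ∧ u w = c := by
  induction y, hxy using Nat.le_induction with
  | base => exact ⟨x, le_rfl, le_rfl, le_antisymm hy hx⟩
  | succ y hxy ih =>
    by_cases hyc : u y ≤ c
    · obtain ⟨w, hxw, hwy, hw⟩ := ih (fun k hk hky => hstep k hk (by omega)) hyc
      exact ⟨w, hxw, by omega, hw⟩
    · have := hstep y hxy (by omega)
      exact ⟨y + 1, by omega, le_rfl, by omega⟩

theorem aprime_sub_one_le_succ (n f : ℕ) (a : ℕ → ℤ)
    (hmono : ∀ i ∈ Set.Icc 1 n, ∀ j ∈ Set.Icc 1 n, i ≤ j → a i ≤ a j)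
    (hfn : f ≤ n) {k : ℕ} (hk : 1 ≤ k) (hkf : k < f) :
    aprime a f k - 1 ≤ aprime a f (k + 1) := by
  have := hmono k ⟨hk, by omega⟩ (k + 1) ⟨by omega, by omega⟩ k.le_succ
  simp only [aprime, if_pos hkf.le, if_pos (Nat.succ_le_of_lt hkf)]
  push_cast
  linarith

theorem fixed_point_sequence_cover_general (n f : ℕ) (a : ℕ → ℤ)
    (hmono : ∀ i ∈ Set.Icc 1 n, ∀ j ∈ Set.Icc 1 n, i ≤ j → a i ≤ a j)
    (hf : f ∈ Set.Icc 1 n)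
    (x y z : ℕ) (hx : 1 ≤ x) (hxy : x < y) (hyz : y < z) (hzf : z ≤ f)
    (h2 : aprime a f z > aprime a f y)
    (h3 : aprime a f x > aprime a f z) :
    ∃ w, x < w ∧ w < y ∧ aprime a f w = aprime a f z := by
  obtain ⟨w, hxw, hwy, hw⟩ := Int.exists_eq_of_sub_one_le_succ (u := aprime a f) hxy.le
    (fun k hxk hky => aprime_sub_one_le_succ n f a hmono hf.2 (by omega) (by omega))
    h3.le h2.le
  refine ⟨w, hxw.lt_of_ne ?_, hwy.lt_of_ne ?_, hw⟩ <;> rintro rfl <;> omega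

/-- for a weakly increasing sequence `1 ≤ a₁ ≤ … ≤ a_n ≤ n` with
exactly one fixed point `f`, if `x < y < z ≤ f` with `a'_x > a'_y`, `a'_z > a'_y`
and `a'_x > a'_z`, then there is `w` with `x < w < y` and `a'_w = a'_z`. -/
theorem fixed_point_sequence_cover (n f : ℕ) (a : ℕ → ℤ)
    (hmono : ∀ i ∈ Set.Icc 1 n, ∀ j ∈ Set.Icc 1 n, i ≤ j → a i ≤ a j)
    (hbd : ∀ i ∈ Set.Icc 1 n, 1 ≤ a i ∧ a i ≤ n)
    (hf : f ∈ Set.Icc 1 n) (haf : a f = f)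
    (huniq : ∀ k ∈ Set.Icc 1 n, a k = k → k = f)
    (x y z : ℕ) (hx : 1 ≤ x) (hxy : x < y) (hyz : y < z) (hzf : z ≤ f)
    (h1 : aprime a f x > aprime a f y) (h2 : aprime a f z > aprime a f y)
    (h3 : aprime a f x > aprime a f z) :
    ∃ w, x < w ∧ w < y ∧ aprime a f w = aprime a f z :=
  fixed_point_sequence_cover_general n f a hmono hf x y z hx hxy hyz hzf h2 h3
end

section
/- In the transfer construction for Catalan structures: if (S_A, R_A) is a Catalan pair on X_A and x is a new element, then S = S_A and R = R_A ∪ {(x,a) : a ∈ X_A} form a Catalan pair on X_A ∪ {x}. -/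
/-- operation 1 for parallelogram polyominoes: adding a new element
`x` with `x R a` for all `a ∈ X_A` yields a Catalan pair on `X_A ∪ {x}`. -/
theorem catalanPair_operation1 {α : Type*} (XA : Set α)
    (SA RA : α → α → Prop) (x : α)
    (hA : IsCatalanPairOn XA SA RA) (hx : x ∉ XA) :
    IsCatalanPairOn (XA ∪ {x}) SA
      (fun a b => RA a b ∨ (a = x ∧ b ∈ XA)) := by
  obtain ⟨hSsup, hRsup, hSirr, hStr, hRirr, hRtr, htot, hdisj, hcomp⟩ := hA
  refine ⟨?_, ?_, hSirr, hStr, ?_, ?_, ?_, ?_, ?_⟩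
  · intro a b h; exact ⟨Or.inl (hSsup a b h).1, Or.inl (hSsup a b h).2⟩
  · rintro a b (h | ⟨rfl, hb⟩)
    · exact ⟨Or.inl (hRsup a b h).1, Or.inl (hRsup a b h).2⟩
    · exact ⟨Or.inr rfl, Or.inl hb⟩
  · rintro a (h | ⟨rfl, ha⟩)
    · exact hRirr a h
    · exact hx ha
  · rintro a b c (h1 | ⟨rfl, hb⟩) (h2 | ⟨rfl, hc⟩)
    · exact Or.inl (hRtr a b c h1 h2)
    · exact absurd (hRsup a b h1).2 hx
    · exact Or.inr ⟨rfl, (hRsup b c h2).2⟩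
    · exact absurd hb hx
  · rintro a (ha | rfl) b (hb | rfl) hne
    · rcases htot a ha b hb hne with h | h | h | h
      · exact Or.inl h
      · exact Or.inr (Or.inl h)
      · exact Or.inr (Or.inr (Or.inl (Or.inl h)))
      · exact Or.inr (Or.inr (Or.inr (Or.inl h)))
    · exact Or.inr (Or.inr (Or.inr (Or.inr ⟨rfl, ha⟩)))
    · exact Or.inr (Or.inr (Or.inl (Or.inr ⟨rfl, hb⟩)))
    · exact absurd rfl hne
  · rintro a b ⟨hs, (hr | ⟨rfl, hb⟩) | (hr | ⟨rfl, ha⟩)⟩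
    · exact hdisj a b ⟨hs, Or.inl hr⟩
    · rcases hs with h | h
      · exact hx (hSsup a b h).1
      · exact hx (hSsup b a h).2
    · exact hdisj a b ⟨hs, Or.inr hr⟩
    · rcases hs with h | h
      · exact hx (hSsup a b h).2
      · exact hx (hSsup b a h).1
  · rintro a b c hs (h | ⟨rfl, hc⟩)
    · exact Or.inl (hcomp a b c hs h)
    · exact absurd (hSsup a b hs).2 hx
end

section
/- If (S_B, R_B) is a Catalan pair on X_B and x is a new element not in X_B, then S = S_B ∪ {(b,x) : b ∈ X_B} and R = R_B form a Catalan pair on X_B ∪ {x}. -/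
/-- operation 2 for parallelogram polyominoes: adding a new element
`x` with `b S x` for all `b ∈ X_B` yields a Catalan pair on `X_B ∪ {x}`. -/
theorem catalanPair_operation2 {α : Type*} (XB : Set α)
    (SB RB : α → α → Prop) (x : α)
    (hB : IsCatalanPairOn XB SB RB) (hx : x ∉ XB) :
    IsCatalanPairOn (XB ∪ {x})
      (fun a b => SB a b ∨ (a ∈ XB ∧ b = x)) RB := by
  obtain ⟨hSdom, hRdom, hSirr, hStrans, hRirr, hRtrans, htot, hdisj, hcomp⟩ := hB
  refine ⟨?_, ?_, ?_, ?_, ?_, ?_, ?_, ?_, ?_⟩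
  · rintro a b (h | ⟨ha, rfl⟩)
    · exact ⟨Or.inl (hSdom a b h).1, Or.inl (hSdom a b h).2⟩
    · exact ⟨Or.inl ha, Or.inr rfl⟩
  · intro a b h
    exact ⟨Or.inl (hRdom a b h).1, Or.inl (hRdom a b h).2⟩
  · rintro a (h | ⟨ha, rfl⟩)
    · exact hSirr a h
    · exact hx ha
  · rintro a b c (h | ⟨ha, rfl⟩) (h' | ⟨hb, rfl⟩)
    · exact Or.inl (hStrans a b c h h')
    · exact Or.inr ⟨(hSdom a b h).1, rfl⟩
    · exact absurd (hSdom _ c h').1 hx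
    · exact absurd hb hx
  · exact hRirr
  · exact hRtrans
  · rintro a (ha | rfl) b (hb | rfl) hne
    · rcases htot a ha b hb hne with h | h | h | h
      · exact Or.inl (Or.inl h)
      · exact Or.inr (Or.inl (Or.inl h))
      · exact Or.inr (Or.inr (Or.inl h))
      · exact Or.inr (Or.inr (Or.inr h))
    · exact Or.inl (Or.inr ⟨ha, rfl⟩)
    · exact Or.inr (Or.inl (Or.inr ⟨hb, rfl⟩))
    · exact absurd rfl hne
  · rintro a b ⟨(h | ⟨ha, rfl⟩) | (h | ⟨hb, rfl⟩), hr⟩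
    · exact hdisj a b ⟨Or.inl h, hr⟩
    · rcases hr with hr | hr
      · exact hx (hRdom a _ hr).2
      · exact hx (hRdom _ a hr).1
    · exact hdisj a b ⟨Or.inr h, hr⟩
    · rcases hr with hr | hr
      · exact hx (hRdom _ b hr).1
      · exact hx (hRdom b _ hr).2
  · rintro a b c (h | ⟨ha, rfl⟩) h'
    · exact hcomp a b c h h'
    · exact absurd (hRdom _ c h').1 hx
end

section
/- Let (S_C,R_C) and (S_D,R_D) be Catalan pairs on disjoint sets X_C, X_D and let x be a new element. Then S = S_C ∪ S_D ∪ {(c,x) : c ∈ X_C} and R = R_C ∪ R_D ∪ {(c,d) : c ∈ X_C, d ∈ X_D} ∪ {(x,d) : d ∈ X_D} form a Catalan pair on X_C ∪ X_D ∪ {x}. -/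
/-- operation 3 for parallelogram polyominoes yields a Catalan pair
on `X_C ∪ X_D ∪ {x}`. -/
theorem catalanPair_operation3 {α : Type*} (XC XD : Set α)
    (SC RC SD RD : α → α → Prop) (x : α)
    (hC : IsCatalanPairOn XC SC RC) (hD : IsCatalanPairOn XD SD RD)
    (hdisj : Disjoint XC XD) (hx : x ∉ XC ∪ XD) :
    IsCatalanPairOn (XC ∪ XD ∪ {x})
      (fun a b => SC a b ∨ SD a b ∨ (a ∈ XC ∧ b = x))
      (fun a b => RC a b ∨ RD a b ∨ (a ∈ XC ∧ b ∈ XD) ∨ (a = x ∧ b ∈ XD)) := by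
  obtain ⟨sC, rC, iSC, tSC, iRC, tRC, totC, dsC, srC⟩ := hC
  obtain ⟨sD, rD, iSD, tSD, iRD, tRD, totD, dsD, srD⟩ := hD
  have hxC : x ∉ XC := fun h => hx (Or.inl h)
  have hxD : x ∉ XD := fun h => hx (Or.inr h)
  have dj : ∀ a, a ∈ XC → a ∉ XD := fun a ha hb => hdisj.le_bot ⟨ha, hb⟩
  have memC : ∀ a ∈ XC, a ∈ XC ∪ XD ∪ {x} := fun a h => Or.inl (Or.inl h)
  have memD : ∀ a ∈ XD, a ∈ XC ∪ XD ∪ {x} := fun a h => Or.inl (Or.inr h)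
  refine ⟨?_, ?_, ?_, ?_, ?_, ?_, ?_, ?_, ?_⟩
  · rintro a b (h | h | ⟨ha, hbx⟩)
    · exact ⟨memC a (sC a b h).1, memC b (sC a b h).2⟩
    · exact ⟨memD a (sD a b h).1, memD b (sD a b h).2⟩
    · exact ⟨memC a ha, Or.inr hbx⟩
  · rintro a b (h | h | ⟨ha, hb⟩ | ⟨hax, hb⟩)
    · exact ⟨memC a (rC a b h).1, memC b (rC a b h).2⟩
    · exact ⟨memD a (rD a b h).1, memD b (rD a b h).2⟩
    · exact ⟨memC a ha, memD b hb⟩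
    · exact ⟨Or.inr hax, memD b hb⟩
  · rintro a (h | h | ⟨ha, hax⟩)
    · exact iSC a h
    · exact iSD a h
    · exact hxC (hax ▸ ha)
  · rintro a b c (h | h | ⟨ha, hbx⟩) (h' | h' | ⟨hb, hcx⟩)
    · exact Or.inl (tSC a b c h h')
    · exact absurd (sD b c h').1 (dj b (sC a b h).2)
    · exact Or.inr (Or.inr ⟨(sC a b h).1, hcx⟩)
    · exact absurd (sC b c h').1 (dj b · (sD a b h).2)
    · exact Or.inr (Or.inl (tSD a b c h h'))
    · exact absurd hb (dj b · (sD a b h).2)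
    · exact absurd (hbx ▸ (sC b c h').1) hxC
    · exact absurd (hbx ▸ (sD b c h').1) hxD
    · exact absurd (hbx ▸ hb) hxC
  · rintro a (h | h | ⟨ha, hb⟩ | ⟨hax, hb⟩)
    · exact iRC a h
    · exact iRD a h
    · exact dj a ha hb
    · exact hxD (hax ▸ hb)
  · rintro a b c (h | h | ⟨ha, hb⟩ | ⟨hax, hb⟩)
      (h' | h' | ⟨hb', hc⟩ | ⟨hbx, hc⟩)
    · exact Or.inl (tRC a b c h h')
    · exact absurd (rD b c h').1 (dj b (rC a b h).2)
    · exact Or.inr (Or.inr (Or.inl ⟨(rC a b h).1, hc⟩))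
    · exact absurd (hbx ▸ (rC a b h).2) hxC
    · exact absurd (rC b c h').1 (dj b · (rD a b h).2)
    · exact Or.inr (Or.inl (tRD a b c h h'))
    · exact absurd hb' (dj b · (rD a b h).2)
    · exact absurd (hbx ▸ (rD a b h).2) hxD
    · exact absurd hb (dj b (rC b c h').1)
    · exact Or.inr (Or.inr (Or.inl ⟨ha, (rD b c h').2⟩))
    · exact absurd hb' (dj b · hb)
    · exact absurd (hbx ▸ hb) hxD
    · exact absurd hb (dj b (rC b c h').1)
    · exact Or.inr (Or.inr (Or.inr ⟨hax, (rD b c h').2⟩))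
    · exact absurd hb' (dj b · hb)
    · exact absurd (hbx ▸ hb) hxD
  · rintro a (ha | hax) b (hb | hbx) hne
    · rcases ha with ha | ha <;> rcases hb with hb | hb
      · rcases totC a ha b hb hne with h | h | h | h
        · exact Or.inl (Or.inl h)
        · exact Or.inr (Or.inl (Or.inl h))
        · exact Or.inr (Or.inr (Or.inl (Or.inl h)))
        · exact Or.inr (Or.inr (Or.inr (Or.inl h)))
      · exact Or.inr (Or.inr (Or.inl (Or.inr (Or.inr (Or.inl ⟨ha, hb⟩)))))
      · exact Or.inr (Or.inr (Or.inr (Or.inr (Or.inr (Or.inl ⟨hb, ha⟩)))))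
      · rcases totD a ha b hb hne with h | h | h | h
        · exact Or.inl (Or.inr (Or.inl h))
        · exact Or.inr (Or.inl (Or.inr (Or.inl h)))
        · exact Or.inr (Or.inr (Or.inl (Or.inr (Or.inl h))))
        · exact Or.inr (Or.inr (Or.inr (Or.inr (Or.inl h))))
    · rcases ha with ha | ha
      · exact Or.inl (Or.inr (Or.inr ⟨ha, hbx⟩))
      · exact Or.inr (Or.inr (Or.inr (Or.inr (Or.inr (Or.inr ⟨hbx.symm ▸ rfl, ha⟩)))))
    · rcases hb with hb | hb
      · exact Or.inr (Or.inl (Or.inr (Or.inr ⟨hb, hax⟩)))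
      · exact Or.inr (Or.inr (Or.inl (Or.inr (Or.inr (Or.inr ⟨hax, hb⟩)))))
    · exact absurd (hax.trans hbx.symm) hne
  · rintro a b ⟨hs, hr⟩
    rcases hr with (h' | h' | ⟨ha', hb'⟩ | ⟨hax', hb'⟩) | (h' | h' | ⟨hb', ha'⟩ | ⟨hbx', ha'⟩) <;>
      rcases hs with (h | h | ⟨ha, hbx⟩) | (h | h | ⟨hb, hax⟩)
    -- hr case 1 : RC a b
    · exact dsC a b ⟨Or.inl h, Or.inl h'⟩
    · exact dj a (rC a b h').1 (sD a b h).1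
    · exact hxC (hbx ▸ (rC a b h').2)
    · exact dsC a b ⟨Or.inr h, Or.inl h'⟩
    · exact dj b (rC a b h').2 (sD b a h).1
    · exact hxC (hax ▸ (rC a b h').1)
    -- hr case 2 : RD a b
    · exact dj a (sC a b h).1 (rD a b h').1
    · exact dsD a b ⟨Or.inl h, Or.inl h'⟩
    · exact hxD (hbx ▸ (rD a b h').2)
    · exact dj b (sC b a h).1 (rD a b h').2
    · exact dsD a b ⟨Or.inr h, Or.inl h'⟩
    · exact hxD (hax ▸ (rD a b h').1)
    -- hr case 3 : a ∈ XC, b ∈ XD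
    · exact dj b (sC a b h).2 hb'
    · exact dj a ha' (sD a b h).1
    · exact hxD (hbx ▸ hb')
    · exact dj b (sC b a h).1 hb'
    · exact dj a ha' (sD b a h).2
    · exact hxC (hax ▸ ha')
    -- hr case 4 : a = x, b ∈ XD
    · exact hxC (hax' ▸ (sC a b h).1)
    · exact hxD (hax' ▸ (sD a b h).1)
    · exact hxC (hax' ▸ ha)
    · exact hxC (hax' ▸ (sC b a h).2)
    · exact hxD (hax' ▸ (sD b a h).2)
    · exact dj b hb hb'
    -- hr case 5 : RC b a
    · exact dsC a b ⟨Or.inl h, Or.inr h'⟩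
    · exact dj a (rC b a h').2 (sD a b h).1
    · exact hxC (hbx ▸ (rC b a h').1)
    · exact dsC a b ⟨Or.inr h, Or.inr h'⟩
    · exact dj b (rC b a h').1 (sD b a h).1
    · exact hxC (hax ▸ (rC b a h').2)
    -- hr case 6 : RD b a
    · exact dj a (sC a b h).1 (rD b a h').2
    · exact dsD a b ⟨Or.inl h, Or.inr h'⟩
    · exact hxD (hbx ▸ (rD b a h').1)
    · exact dj b (sC b a h).1 (rD b a h').1
    · exact dsD a b ⟨Or.inr h, Or.inr h'⟩
    · exact hxD (hax ▸ (rD b a h').2)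
    -- hr case 7 : b ∈ XC, a ∈ XD
    · exact dj a (sC a b h).1 ha'
    · exact dj b hb' (sD a b h).2
    · exact dj a ha ha'
    · exact dj a (sC b a h).2 ha'
    · exact dj b hb' (sD b a h).1
    · exact hxD (hax ▸ ha')
    -- hr case 8 : b = x, a ∈ XD
    · exact hxC (hbx' ▸ (sC a b h).2)
    · exact hxD (hbx' ▸ (sD a b h).2)
    · exact dj a ha ha'
    · exact hxC (hbx' ▸ (sC b a h).1)
    · exact hxD (hbx' ▸ (sD b a h).1)
    · exact hxC (hbx' ▸ hb)
  · rintro a b c (h | h | ⟨ha, hbx⟩) (h' | h' | ⟨hb', hc⟩ | ⟨hbx', hc⟩)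
    · exact Or.inl (srC a b c h h')
    · exact absurd (rD b c h').1 (dj b (sC a b h).2)
    · exact Or.inr (Or.inr (Or.inl ⟨(sC a b h).1, hc⟩))
    · exact absurd (hbx' ▸ (sC a b h).2) hxC
    · exact absurd (rC b c h').1 (dj b · (sD a b h).2)
    · exact Or.inr (Or.inl (srD a b c h h'))
    · exact absurd hb' (dj b · (sD a b h).2)
    · exact absurd (hbx' ▸ (sD a b h).2) hxD
    · exact absurd (hbx ▸ (rC b c h').1) hxC
    · exact absurd (hbx ▸ (rD b c h').1) hxD
    · exact absurd (hbx ▸ hb') hxC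
    · exact Or.inr (Or.inr (Or.inl ⟨ha, hc⟩))
end

section
/- Let t be a plane (rooted, ordered) tree and X the set of its non-root nodes. Define xSy iff x is a proper descendant of y, and xRy iff x lies strictly to the left of y (i.e., their minimum common ancestor a satisfies a ∉ {x,y} and the subtree containing x comes before the subtree containing y in the ordering of children). Then (S,R) is a Catalan pair on X. -/
/-- A plane tree: a root together with a linearly ordered list of subtrees. -/
inductive PlaneTree : Type
  | node : List PlaneTree → PlaneTree

/-- `IsNode t p`: the path `p` (a list of child indices read from the root)
addresses a node of the plane tree `t`. -/
def PlaneTree.IsNode : PlaneTree → List ℕ → Prop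
  | _, [] => True
  | .node ts, i :: p => ∃ h : i < ts.length, PlaneTree.IsNode ts[i] p

private lemma head_eq_of_prefix {p : List ℕ} {i j : ℕ} {xs ys : List ℕ}
    (h : p ++ i :: xs <+: p ++ j :: ys) : i = j := by
  obtain ⟨t, ht⟩ := h
  rw [List.append_assoc] at ht
  have := List.append_cancel_left ht
  simpa using congrArg List.head? this

private lemma cmp_lists : ∀ (a b : List ℕ), a <+: b ∨ b <+: a ∨
    ∃ p i j xs ys, a = p ++ i :: xs ∧ b = p ++ j :: ys ∧ i ≠ j
  | [], _ => Or.inl (List.nil_prefix)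
  | _ :: _, [] => Or.inr (Or.inl (List.nil_prefix))
  | i :: xs, j :: ys => by
    rcases eq_or_ne i j with rfl | hij
    · rcases cmp_lists xs ys with h | h | ⟨p, i', j', xs', ys', h1, h2, h3⟩
      · exact Or.inl (List.cons_prefix_cons.mpr ⟨rfl, h⟩)
      · exact Or.inr (Or.inl (List.cons_prefix_cons.mpr ⟨rfl, h⟩))
      · exact Or.inr (Or.inr ⟨i :: p, i', j', xs', ys', by simp [h1], by simp [h2], h3⟩)
    · exact Or.inr (Or.inr ⟨[], i, j, xs, ys, rfl, rfl, hij⟩)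

/-- on the set of non-root nodes of a plane tree, `S` = proper
descendant and `R` = strictly-to-the-left form a Catalan pair. -/
theorem catalanPair_of_planeTree (t : PlaneTree) :
    IsCatalanPairOn {p : List ℕ | p ≠ [] ∧ t.IsNode p}
      -- x S y : x is a proper descendant of y
      (fun x y => (x ≠ [] ∧ t.IsNode x) ∧ (y ≠ [] ∧ t.IsNode y) ∧
        y <+: x ∧ x ≠ y)
      -- x R y : the minimum common ancestor a of x and y satisfies a ∉ {x,y},
      -- and the child-subtree containing x precedes the one containing y
      (fun x y => (x ≠ [] ∧ t.IsNode x) ∧ (y ≠ [] ∧ t.IsNode y) ∧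
        ∃ (p : List ℕ) (i j : ℕ) (xs ys : List ℕ),
          x = p ++ i :: xs ∧ y = p ++ j :: ys ∧ i < j) := by
  refine ⟨fun a b h => ⟨h.1, h.2.1⟩, fun a b h => ⟨h.1, h.2.1⟩, ?_, ?_, ?_, ?_, ?_, ?_, ?_⟩
  · rintro a ⟨-, -, -, h⟩; exact h rfl
  · rintro a b c ⟨ha, hb, hba, hab⟩ ⟨-, hc, hcb, hbc⟩
    refine ⟨ha, hc, hcb.trans hba, ?_⟩
    rintro rfl
    exact hbc (hcb.eq_of_length (hcb.length_le.antisymm hba.length_le)).symm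
  · rintro a ⟨-, -, p, i, j, xs, ys, h1, h2, hij⟩
    have : i = j := head_eq_of_prefix (by rw [← h1, ← h2] : p ++ i :: xs <+: p ++ j :: ys)
    omega
  · rintro a b c ⟨ha, hb, p, i, j, xs, ys, h1, h2, hij⟩ ⟨-, hc, q, k, l, zs, ws, h3, h4, hkl⟩
    refine ⟨ha, hc, ?_⟩
    have hb2 : p ++ j :: ys = q ++ k :: zs := h2 ▸ h3
    rcases List.prefix_or_prefix_of_prefix (⟨j :: ys, rfl⟩ : p <+: p ++ j :: ys)
      (show q <+: p ++ j :: ys from ⟨k :: zs, hb2.symm⟩) with ⟨r, rfl⟩ | ⟨r, rfl⟩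
    · rcases r with - | ⟨m, r⟩
      · simp only [List.append_nil] at hb2 h4
        have hjk : j = k := by
          have := List.append_cancel_left hb2
          simpa using congrArg List.head? this
        exact ⟨p, i, l, xs, ws, h1, h4, by omega⟩
      · rw [List.append_assoc] at hb2
        have hjm : j = m := by
          have := List.append_cancel_left hb2
          simpa using congrArg List.head? this
        subst hjm
        exact ⟨p, i, j, xs, r ++ l :: ws, h1, by rw [h4]; simp, hij⟩
    · rcases r with - | ⟨m, r⟩
      · simp only [List.append_nil] at hb2 h1
        have hjk : j = k := by
          have := List.append_cancel_left hb2
          simpa using congrArg List.head? this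
        exact ⟨q, i, l, xs, ws, h1, h4, by omega⟩
      · rw [List.append_assoc] at hb2
        have hkm : m = k := by
          have := List.append_cancel_left hb2.symm
          exact (by simpa using congrArg List.head? this : k = m).symm
        subst hkm
        exact ⟨q, m, l, r ++ i :: xs, ws, by rw [h1]; simp, h4, hkl⟩
  · rintro a ⟨ha1, ha2⟩ b ⟨hb1, hb2⟩ hab
    rcases cmp_lists a b with h | h | ⟨p, i, j, xs, ys, h1, h2, hij⟩
    · exact Or.inr (Or.inl ⟨⟨hb1, hb2⟩, ⟨ha1, ha2⟩, h, hab.symm⟩)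
    · exact Or.inl ⟨⟨ha1, ha2⟩, ⟨hb1, hb2⟩, h, hab⟩
    · rcases lt_or_gt_of_ne hij with hlt | hlt
      · exact Or.inr (Or.inr (Or.inl ⟨⟨ha1, ha2⟩, ⟨hb1, hb2⟩, p, i, j, xs, ys, h1, h2, hlt⟩))
      · exact Or.inr (Or.inr (Or.inr ⟨⟨hb1, hb2⟩, ⟨ha1, ha2⟩, p, j, i, ys, xs, h2, h1, hlt⟩))
  · rintro a b ⟨hS | hS, hR | hR⟩ <;>
      obtain ⟨-, -, hpre, -⟩ := hS <;>
      obtain ⟨-, -, p, i, j, xs, ys, h1, h2, hij⟩ := hR <;>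
      subst h1 <;> subst h2
    · exact absurd (head_eq_of_prefix hpre) (by omega)
    · exact absurd (head_eq_of_prefix hpre) (by omega)
    · exact absurd (head_eq_of_prefix hpre) (by omega)
    · exact absurd (head_eq_of_prefix hpre) (by omega)
  · rintro a b c ⟨ha, hb, ⟨r, rfl⟩, -⟩ ⟨-, hc, p, i, j, xs, ys, h1, h2, hij⟩
    exact ⟨ha, hc, p, i, j, xs ++ r, ys, by rw [h1]; simp, h2, hij⟩
end
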